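/- arXiv:math/0403206 — 3 statements merged into one kernel-verified Lean document; each statement's English description precedes it below -/
import Mathlib

section
/- Let F be a field of characteristic 0, N ≥ 1, and s ∈ F an element with s^n ≠ 1 for all 1 ≤ n ≤ N. Define symmetric polynomials c_0 = 1, c_1, c_2, … ∈ F[X_1,…,X_N] by the generating function identity Σ_{n≥0} c_n t^n = ∏_{i=1}^N (1 − s X_i t)(1 − X_i t)^{−1} in F[X_1,…,X_N][[t]]. Then c_1, …, c_N are algebraically independent over F and generate the F-subalgebra of all symmetric polynomials in X_1, …, X_N. -/
open PowerSeries MvPolynomial Finset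

private noncomputable def xeAux (F : Type) [Field F] (N : ℕ) (k : ℕ) :
    MvPolynomial (Fin N) F :=
  if h : 1 ≤ k ∧ k ≤ N then MvPolynomial.X ⟨k - 1, by omega⟩ else if k = 0 then 1 else 0

private lemma coeff_prod_one_sub_aux {A : Type} [CommRing A] {σ : Type} [DecidableEq σ]
    (f : σ → A) (s : Finset σ) (k : ℕ) :
    PowerSeries.coeff k (∏ i ∈ s, (1 - PowerSeries.C (f i) * PowerSeries.X))
      = (-1) ^ k * ∑ t ∈ s.powersetCard k, ∏ i ∈ t, f i := by
  induction s using Finset.induction_on generalizing k with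
  | empty =>
    cases k with
    | zero => simp
    | succ k =>
      rw [Finset.prod_empty, Finset.powersetCard_eq_empty.mpr (by simp)]
      simp [PowerSeries.coeff_one]
  | @insert a s ha ih =>
    have hX : (1 - PowerSeries.C (f a) * PowerSeries.X) *
        ∏ i ∈ s, (1 - PowerSeries.C (f i) * PowerSeries.X)
        = ∏ i ∈ s, (1 - PowerSeries.C (f i) * PowerSeries.X)
          - PowerSeries.C (f a) *
            ((∏ i ∈ s, (1 - PowerSeries.C (f i) * PowerSeries.X)) * PowerSeries.X) := by
      ring
    rw [Finset.prod_insert ha, hX, map_sub, PowerSeries.coeff_C_mul]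
    cases k with
    | zero =>
      simp [ih, Finset.powersetCard_zero]
    | succ k =>
      have hdisj : Disjoint (Finset.powersetCard (k+1) s)
          ((Finset.powersetCard k s).image (insert a)) := by
        rw [Finset.disjoint_left]
        intro t ht1 ht2
        obtain ⟨u, hu, rfl⟩ := Finset.mem_image.mp ht2
        exact ha ((Finset.mem_powersetCard.mp ht1).1 (Finset.mem_insert_self a u))
      have hinj : ∀ x ∈ Finset.powersetCard k s, ∀ y ∈ Finset.powersetCard k s,
          insert a x = insert a y → x = y := by
        intro x hx y hy hxy
        have hax : a ∉ x := fun h => ha ((Finset.mem_powersetCard.mp hx).1 h)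
        have hay : a ∉ y := fun h => ha ((Finset.mem_powersetCard.mp hy).1 h)
        rw [← Finset.erase_insert hax, hxy, Finset.erase_insert hay]
      rw [PowerSeries.coeff_succ_mul_X, ih (k+1), ih k,
        Finset.powersetCard_succ_insert ha, Finset.sum_union hdisj,
        Finset.sum_image hinj]
      have : ∑ t ∈ Finset.powersetCard k s, ∏ i ∈ insert a t, f i
          = f a * ∑ t ∈ Finset.powersetCard k s, ∏ i ∈ t, f i := by
        rw [Finset.mul_sum]
        refine Finset.sum_congr rfl fun t ht => ?_
        rw [Finset.prod_insert (fun h => ha ((Finset.mem_powersetCard.mp ht).1 h))]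
      rw [this]
      ring

private lemma surj_inj_aux {R : Type} [CommRing R] [IsNoetherianRing R] (f : R →+* R)
    (hf : Function.Surjective f) : Function.Injective f := by
  have hmono : Monotone (fun n : ℕ => RingHom.ker (f ^ n)) := by
    apply monotone_nat_of_le_succ
    intro n x hx
    rw [RingHom.mem_ker] at hx ⊢
    rw [pow_succ']
    show f ((f ^ n) x) = 0
    rw [hx, map_zero]
  obtain ⟨n, hn⟩ := monotone_stabilizes_iff_noetherian.mpr inferInstance
    ⟨fun n => RingHom.ker (f ^ n), hmono⟩
  rw [injective_iff_map_eq_zero]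
  intro a ha
  obtain ⟨b, hb⟩ : ∃ b, (f ^ n) b = a := by
    have hsn : Function.Surjective ⇑(f ^ n) := by
      rw [RingHom.coe_pow]; exact hf.iterate n
    exact hsn a
  have hb1 : b ∈ RingHom.ker (f ^ (n + 1)) := by
    rw [RingHom.mem_ker, pow_succ']
    show f ((f ^ n) b) = 0
    rw [hb, ha]
  have h : RingHom.ker (f ^ n) = RingHom.ker (f ^ (n + 1)) := hn (n + 1) (Nat.le_succ n)
  rw [← h, RingHom.mem_ker] at hb1
  rw [← hb, hb1]

/-- Let `F` be a field of characteristic `0`, `N ≥ 1`, and `s ∈ F` with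
`s^n ≠ 1` for all `1 ≤ n ≤ N`. Define symmetric polynomials `c 0 = 1, c 1, c 2, …` in
`F[X_1,…,X_N]` by the generating function identity
`∑_{n≥0} c_n t^n = ∏_{i=1}^N (1 - s X_i t)(1 - X_i t)⁻¹`, characterised by
`(∑_n c_n t^n) · ∏_i (1 - X_i t) = ∏_i (1 - s X_i t)`. Then `c 1, …, c N` are
algebraically independent over `F` and generate the `F`-subalgebra of all symmetric
polynomials in `X_1, …, X_N`. -/
theorem hall_littlewood_one_row_algebraically_independent_generate
    (F : Type) [Field F] [CharZero F] (N : ℕ) (hN : 1 ≤ N)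
    (s : F) (hs : ∀ n : ℕ, 1 ≤ n → n ≤ N → s ^ n ≠ 1)
    (c : ℕ → MvPolynomial (Fin N) F) (hc0 : c 0 = 1)
    (hgen : PowerSeries.mk c * ∏ i : Fin N,
          (1 - PowerSeries.C (X i) * PowerSeries.X)
        = ∏ i : Fin N,
          (1 - PowerSeries.C (MvPolynomial.C s * X i) *
            PowerSeries.X)) :
    AlgebraicIndependent F (fun j : Fin N => c (j.val + 1)) ∧
      Algebra.adjoin F (Set.range fun j : Fin N => c (j.val + 1))
        = symmetricSubalgebra (Fin N) F := by
  classical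
  -- coefficients of the two products
  have hD : ∀ k : ℕ, (PowerSeries.coeff k)
      (∏ i : Fin N, (1 - PowerSeries.C (X i) * PowerSeries.X))
      = (-1) ^ k * esymm (Fin N) F k := by
    intro k
    rw [coeff_prod_one_sub_aux]
    rfl
  have hD' : ∀ k : ℕ, (PowerSeries.coeff k)
      (∏ i : Fin N, (1 - PowerSeries.C (MvPolynomial.C s * X i) *
        PowerSeries.X))
      = (-1) ^ k * (MvPolynomial.C (s ^ k) * esymm (Fin N) F k) := by
    intro k
    rw [coeff_prod_one_sub_aux]
    congr 1
    rw [esymm, Finset.mul_sum]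
    refine Finset.sum_congr rfl fun t ht => ?_
    rw [Finset.prod_mul_distrib, Finset.prod_const,
      Finset.mem_powersetCard_univ.mp ht, map_pow]
  -- the recursion for c
  have hkey : ∀ n : ℕ, c n = (-1) ^ n * (MvPolynomial.C (s ^ n) * esymm (Fin N) F n)
      - ∑ i ∈ Finset.range n, c i * ((-1) ^ (n - i) * esymm (Fin N) F (n - i)) := by
    intro n
    have h := congrArg (PowerSeries.coeff n) hgen
    rw [PowerSeries.coeff_mul, hD'] at h
    simp only [PowerSeries.coeff_mk, hD] at h
    rw [Finset.Nat.sum_antidiagonal_eq_sum_range_succ_mk, Finset.sum_range_succ] at h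
    simp only [Nat.sub_self, pow_zero, esymm_zero, mul_one, one_mul] at h
    linear_combination h
  -- every c n is symmetric
  have hcS : ∀ n : ℕ, c n ∈ symmetricSubalgebra (Fin N) F := by
    intro n
    induction n using Nat.strong_induction_on with
    | _ n ih =>
      rw [hkey n]
      have hCmem : ∀ a : F, MvPolynomial.C a ∈ symmetricSubalgebra (Fin N) F := by
        intro a
        have := (symmetricSubalgebra (Fin N) F).algebraMap_mem a
        rwa [MvPolynomial.algebraMap_eq] at this
      have hneg : ∀ m : ℕ, ((-1 : MvPolynomial (Fin N) F)) ^ m ∈ symmetricSubalgebra (Fin N) F :=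
        fun m => pow_mem (neg_mem (one_mem _)) m
      have hesymm : ∀ m : ℕ, esymm (Fin N) F m ∈ symmetricSubalgebra (Fin N) F :=
        fun m => (mem_symmetricSubalgebra _).mpr (esymm_isSymmetric _ _ m)
      exact sub_mem (mul_mem (hneg n) (mul_mem (hCmem _) (hesymm n)))
        (Subalgebra.sum_mem _ fun i hi => mul_mem (ih i (Finset.mem_range.mp hi))
          (mul_mem (hneg _) (hesymm _)))
  -- the esymm evaluation map
  set Φ : MvPolynomial (Fin N) F →ₐ[F] MvPolynomial (Fin N) F :=
    MvPolynomial.aeval (fun i : Fin N => esymm (Fin N) F (↑i + 1)) with hΦdef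
  have hΦ : ∀ p, Φ p = ((esymmAlgHom (Fin N) F N) p).val :=
    fun p => (esymmAlgHom_apply p).symm
  have hΦinj : Function.Injective Φ := by
    intro p q hpq
    apply (esymmAlgHom_fin_bijective F N).1
    apply Subtype.ext
    rw [← hΦ, ← hΦ, hpq]
  have hΦc : ∀ n, ∃ p, Φ p = c n := by
    intro n
    obtain ⟨p, hp⟩ := (esymmAlgHom_fin_bijective F N).2 ⟨c n, hcS n⟩
    exact ⟨p, by rw [hΦ, hp]⟩
  set q : ℕ → MvPolynomial (Fin N) F := fun n => (hΦc n).choose with hqdef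
  have hq : ∀ n, Φ (q n) = c n := fun n => (hΦc n).choose_spec
  have hq0 : q 0 = 1 := hΦinj (by rw [hq, hc0, map_one])
  -- Φ maps xeAux to esymm
  have hxe : ∀ k, Φ (xeAux F N k) = esymm (Fin N) F k := by
    intro k
    by_cases h : 1 ≤ k ∧ k ≤ N
    · rw [xeAux, dif_pos h, hΦdef, MvPolynomial.aeval_X]
      congr 1
      show k - 1 + 1 = k
      omega
    · rw [xeAux, dif_neg h]
      rcases Nat.eq_zero_or_pos k with rfl | hk
      · simp
      · have hkN : N < k := by omega
        rw [if_neg (by omega), map_zero, esymm,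
          Finset.powersetCard_eq_empty.mpr (by simpa using hkN), Finset.sum_empty]
  -- the preimage recursion
  have hqkey : ∀ n : ℕ, q n = (-1) ^ n * (MvPolynomial.C (s ^ n) * xeAux F N n)
      - ∑ i ∈ Finset.range n, q i * ((-1) ^ (n - i) * xeAux F N (n - i)) := by
    intro n
    apply hΦinj
    rw [hq, map_sub, map_mul, map_mul, map_pow, map_neg, map_one, hxe, map_sum]
    have hC : Φ (MvPolynomial.C (s ^ n)) = MvPolynomial.C (s ^ n) := by
      rw [hΦdef, MvPolynomial.aeval_C, MvPolynomial.algebraMap_eq]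
    rw [hC]
    have hsum : ∀ i ∈ Finset.range n,
        Φ (q i * ((-1) ^ (n - i) * xeAux F N (n - i)))
          = c i * ((-1) ^ (n - i) * esymm (Fin N) F (n - i)) := by
      intro i _
      rw [map_mul, map_mul, map_pow, map_neg, map_one, hq, hxe]
    rw [Finset.sum_congr rfl hsum]
    exact hkey n
  -- generation of the variables
  set q' : Fin N → MvPolynomial (Fin N) F := fun j => q (j.val + 1) with hq'def
  set T := Algebra.adjoin F (Set.range q') with hTdef
  have hqT : ∀ i : ℕ, 1 ≤ i → i ≤ N → q i ∈ T := by
    intro i h1 h2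
    have : q i = q' ⟨i - 1, by omega⟩ := by
      rw [hq'def]
      congr 1
      show i = i - 1 + 1
      omega
    rw [this]
    exact Algebra.subset_adjoin ⟨_, rfl⟩
  have hCT : ∀ a : F, MvPolynomial.C a ∈ T := by
    intro a
    have := T.algebraMap_mem a
    rwa [MvPolynomial.algebraMap_eq] at this
  have hmain : ∀ n : ℕ, n ≤ N → xeAux F N n ∈ T := by
    intro n
    induction n using Nat.strong_induction_on with
    | _ n ih =>
      intro hn
      rcases Nat.eq_zero_or_pos n with rfl | hpos
      · have : xeAux F N 0 = 1 := by simp [xeAux]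
        rw [this]; exact one_mem T
      · have hu : s ^ n - 1 ≠ 0 := sub_ne_zero.mpr (hs n hpos hn)
        have hsplit : ∑ i ∈ Finset.range n, q i * ((-1) ^ (n - i) * xeAux F N (n - i))
            = (-1) ^ n * xeAux F N n
              + ∑ i ∈ Finset.Ico 1 n, q i * ((-1) ^ (n - i) * xeAux F N (n - i)) := by
          rw [Finset.range_eq_Ico, Finset.sum_eq_sum_Ico_succ_bot hpos]
          rw [hq0, Nat.sub_zero, one_mul]
        have heq := hqkey n
        rw [hsplit] at heq
        have hsq : ((-1 : MvPolynomial (Fin N) F) ^ n) * (-1) ^ n = 1 := by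
          rw [← pow_add]
          exact Even.neg_one_pow ⟨n, rfl⟩
        have hy : MvPolynomial.C (s ^ n - 1) * xeAux F N n
            = (-1) ^ n * (q n + ∑ i ∈ Finset.Ico 1 n,
                q i * ((-1) ^ (n - i) * xeAux F N (n - i))) := by
          rw [map_sub, map_one]
          linear_combination (-((-1 : MvPolynomial (Fin N) F) ^ n)) * heq
            - (MvPolynomial.C (s ^ n) * xeAux F N n - xeAux F N n) * hsq
        have hxen : xeAux F N n = MvPolynomial.C ((s ^ n - 1)⁻¹) * ((-1) ^ n * (q n
            + ∑ i ∈ Finset.Ico 1 n, q i * ((-1) ^ (n - i) * xeAux F N (n - i)))) := by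
          rw [← hy, ← mul_assoc, ← map_mul, inv_mul_cancel₀ hu, map_one, one_mul]
        rw [hxen]
        refine mul_mem (hCT _) (mul_mem (pow_mem (neg_mem (one_mem _)) n)
          (add_mem (hqT n hpos hn) (Subalgebra.sum_mem _ fun i hi => ?_)))
        have hi1 := Finset.mem_Ico.mp hi
        exact mul_mem (hqT i hi1.1 (by omega)) (mul_mem (pow_mem (neg_mem (one_mem _)) _)
          (ih (n - i) (by omega) (by omega)))
  have hXT : ∀ j : Fin N, (X j : MvPolynomial (Fin N) F) ∈ T := by
    intro j
    have hj : (X j : MvPolynomial (Fin N) F) = xeAux F N (j.val + 1) := by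
      rw [xeAux, dif_pos ⟨by omega, by omega⟩]
      congr 1
    rw [hj]
    exact hmain (j.val + 1) (by omega)
  -- surjectivity of aeval q'
  have hsurj : Function.Surjective (MvPolynomial.aeval q' :
      MvPolynomial (Fin N) F →ₐ[F] MvPolynomial (Fin N) F) := by
    rw [← AlgHom.range_eq_top, ← Algebra.adjoin_range_eq_range_aeval, eq_top_iff,
      ← MvPolynomial.adjoin_range_X]
    apply Algebra.adjoin_le
    rintro _ ⟨j, rfl⟩
    exact hXT j
  have hinj : Function.Injective (MvPolynomial.aeval q' :
      MvPolynomial (Fin N) F →ₐ[F] MvPolynomial (Fin N) F) :=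
    surj_inj_aux (MvPolynomial.aeval q' :
      MvPolynomial (Fin N) F →ₐ[F] MvPolynomial (Fin N) F).toRingHom hsurj
  have hcomp : Φ.comp (MvPolynomial.aeval q')
      = MvPolynomial.aeval (fun j : Fin N => c (j.val + 1)) := by
    rw [MvPolynomial.comp_aeval]
    congr 1
    funext j
    exact hq (j.val + 1)
  constructor
  · rw [AlgebraicIndependent]
    have : ⇑(MvPolynomial.aeval (fun j : Fin N => c (j.val + 1)) :
        MvPolynomial (Fin N) F →ₐ[F] MvPolynomial (Fin N) F)
        = ⇑Φ ∘ ⇑(MvPolynomial.aeval q' :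
        MvPolynomial (Fin N) F →ₐ[F] MvPolynomial (Fin N) F) := by
      rw [← hcomp, AlgHom.coe_comp]
    rw [this]
    exact hΦinj.comp hinj
  · rw [Algebra.adjoin_range_eq_range_aeval, ← hcomp]
    ext x
    simp only [AlgHom.mem_range, AlgHom.comp_apply]
    constructor
    · rintro ⟨p, rfl⟩
      rw [hΦ]
      exact (mem_symmetricSubalgebra _).mpr
        ((esymmAlgHom (Fin N) F N (MvPolynomial.aeval q' p)).2)
    · intro hx
      obtain ⟨p, hp⟩ := (esymmAlgHom_fin_bijective F N).2 ⟨x, hx⟩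
      obtain ⟨p', hp'⟩ := hsurj p
      refine ⟨p', ?_⟩
      rw [hp', hΦ, hp]
end

section
/- Let k be a finite field, A a finite-dimensional k-algebra, and M, N finite-dimensional left A-modules. Then the number of A-submodules Y ⊆ M ⊕ N such that Y ≅ N and (M ⊕ N)/Y ≅ M equals |Aut_A(M ⊕ N)| / ( |Aut_A(M)| · |Aut_A(N)| · |Hom_A(M,N)| ). -/
open Pointwise

namespace HallAux

variable {A : Type} [Ring A]
variable {M N : Type} [AddCommGroup M] [AddCommGroup N] [Module A M] [Module A N]

instance finiteLinearMap [Finite M] [Finite N] : Finite (M →ₗ[A] N) :=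
  Finite.of_injective (fun f => (f : M → N)) DFunLike.coe_injective

instance finiteLinearEquiv [Finite M] [Finite N] : Finite (M ≃ₗ[A] N) :=
  Finite.of_injective (fun f => (f : M → N)) DFunLike.coe_injective

variable (A M N) in
/-- The submodule `0 × N` of `M × N`. -/
abbrev Y0 : Submodule A (M × N) := (⊥ : Submodule A M).prod (⊤ : Submodule A N)

lemma mem_Y0 (x : M × N) : x ∈ Y0 A M N ↔ x.1 = 0 := by
  simp [Submodule.mem_prod]

lemma smul_def' (g : (M × N) ≃ₗ[A] (M × N)) (p : Submodule A (M × N)) :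
    g • p = Submodule.map (g : (M × N) →ₗ[A] (M × N)) p :=
  congrArg (fun f : (M × N) →ₗ[A] (M × N) => p.map f) (LinearMap.ext fun _ => rfl)

/-- `Y0 ≅ N`. -/
noncomputable def e0 : (Y0 A M N) ≃ₗ[A] N := by
  refine LinearEquiv.ofBijective (LinearMap.snd A M N ∘ₗ (Y0 A M N).subtype) ⟨?_, ?_⟩
  · rintro ⟨x, hx⟩ ⟨y, hy⟩ h
    rw [mem_Y0] at hx hy
    simp only [LinearMap.comp_apply, Submodule.subtype_apply, LinearMap.snd_apply] at h
    exact Subtype.ext (Prod.ext (hx.trans hy.symm) h)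
  · intro n
    exact ⟨⟨(0, n), by simp [mem_Y0]⟩, rfl⟩

lemma Y0_le_ker_fst : Y0 A M N ≤ LinearMap.ker (LinearMap.fst A M N) := by
  intro x hx
  simpa [LinearMap.mem_ker] using (mem_Y0 x).mp hx

/-- `(M × N) ⧸ Y0 ≅ M`. -/
noncomputable def q0 : ((M × N) ⧸ Y0 A M N) ≃ₗ[A] M := by
  refine LinearEquiv.ofBijective ((Y0 A M N).liftQ (LinearMap.fst A M N) Y0_le_ker_fst) ⟨?_, ?_⟩
  · rw [← LinearMap.ker_eq_bot]
    refine Submodule.ker_liftQ_eq_bot _ _ _ ?_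
    intro x hx
    rw [LinearMap.mem_ker] at hx
    exact (mem_Y0 x).mpr hx
  · intro m
    exact ⟨Submodule.Quotient.mk (m, 0), by simp⟩

section Transitivity

variable [Finite M] [Finite N]

/-- Counting argument: the projection onto `M` splits. -/
lemma exists_section (Y : Submodule A (M × N)) (e : Y ≃ₗ[A] N)
    (q : ((M × N) ⧸ Y) ≃ₗ[A] M) :
    ∃ s : M →ₗ[A] (M × N),
      (q.toLinearMap ∘ₗ Y.mkQ) ∘ₗ s = LinearMap.id := by
  set π : (M × N) →ₗ[A] M := q.toLinearMap ∘ₗ Y.mkQ with hπ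
  have hπ0 : ∀ z ∈ Y, π z = 0 := by
    intro z hz
    have hz0 : Y.mkQ z = 0 := (Submodule.Quotient.mk_eq_zero _).mpr hz
    show q (Y.mkQ z) = 0
    rw [hz0, map_zero]
  have hker : ∀ z : M × N, π z = 0 → z ∈ Y := by
    intro z hz
    have h0 : q (Y.mkQ z) = q 0 := by rw [map_zero]; exact hz
    exact (Submodule.Quotient.mk_eq_zero _).mp (q.injective h0)
  -- the additive map "compose with π"
  set Φ : (M →ₗ[A] M × N) →+ (M →ₗ[A] M) :=
    { toFun := fun f => π ∘ₗ f
      map_zero' := by ext x; simp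
      map_add' := by intro f g; ext x; simp } with hΦ
  have hΦapp : ∀ (f : M →ₗ[A] M × N) (x : M), Φ f x = π (f x) := fun _ _ => rfl
  -- cardinality of the domain
  have Edom : (M →ₗ[A] M × N) ≃ (M →ₗ[A] M) × (M →ₗ[A] N) :=
    { toFun := fun f => (LinearMap.fst A M N ∘ₗ f, LinearMap.snd A M N ∘ₗ f)
      invFun := fun p => p.1.prod p.2
      left_inv := by intro f; ext x <;> simp
      right_inv := by intro p; constructor <;> (ext x; simp) }
  have card_dom : Nat.card (M →ₗ[A] M × N)
      = Nat.card (M →ₗ[A] M) * Nat.card (M →ₗ[A] N) := by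
    rw [Nat.card_congr Edom, Nat.card_prod]
  -- cardinality of the kernel
  have Eker : ↥Φ.ker ≃ (M →ₗ[A] N) :=
    { toFun := fun f =>
        e.toLinearMap ∘ₗ LinearMap.codRestrict Y f.1 (by
          intro x
          have h0 : Φ f.1 = 0 := f.2
          refine hker _ ?_
          rw [← hΦapp f.1 x, h0]
          rfl)
      invFun := fun h =>
        ⟨Y.subtype ∘ₗ (e.symm.toLinearMap ∘ₗ h), by
          refine AddMonoidHom.mem_ker.mpr ?_
          ext x
          have hmem : (Y.subtype ∘ₗ (e.symm.toLinearMap ∘ₗ h)) x ∈ Y := by simp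
          simpa [hΦapp] using hπ0 _ hmem⟩
      left_inv := by
        rintro ⟨f, hf⟩
        apply Subtype.ext
        ext x <;> simp
      right_inv := by
        intro h
        ext x
        exact e.apply_symm_apply (h x) }
  have card_ker : Nat.card ↥Φ.ker = Nat.card (M →ₗ[A] N) := Nat.card_congr Eker
  -- first isomorphism theorem counting
  have card_split : Nat.card (M →ₗ[A] M × N) = Nat.card ↥Φ.range * Nat.card ↥Φ.ker := by
    rw [AddSubgroup.card_eq_card_quotient_mul_card_addSubgroup Φ.ker,
      Nat.card_congr (QuotientAddGroup.quotientKerEquivRange Φ).toEquiv]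
  have hkpos : 0 < Nat.card (M →ₗ[A] N) := Nat.card_pos
  have card_range : Nat.card ↥Φ.range = Nat.card (M →ₗ[A] M) := by
    have h1 : Nat.card ↥Φ.range * Nat.card (M →ₗ[A] N)
        = Nat.card (M →ₗ[A] M) * Nat.card (M →ₗ[A] N) := by
      rw [← card_ker, ← card_split, card_dom, card_ker]
    exact Nat.eq_of_mul_eq_mul_right hkpos h1
  have hrange_top : Φ.range = ⊤ := AddSubgroup.eq_top_of_card_eq _ card_range
  have hid : LinearMap.id (R := A) (M := M) ∈ Φ.range := by rw [hrange_top]; trivial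
  obtain ⟨s, hs⟩ := hid
  exact ⟨s, hs⟩

/-- Transitivity: any submodule isomorphic to `N` with quotient isomorphic to `M`
is in the orbit of `Y0`. -/
lemma exists_equiv_map (Y : Submodule A (M × N)) (e : Y ≃ₗ[A] N)
    (q : ((M × N) ⧸ Y) ≃ₗ[A] M) :
    ∃ g : (M × N) ≃ₗ[A] (M × N),
      Submodule.map (g : (M × N) →ₗ[A] (M × N)) (Y0 A M N) = Y := by
  obtain ⟨s, hs⟩ := exists_section Y e q
  set π : (M × N) →ₗ[A] M := q.toLinearMap ∘ₗ Y.mkQ with hπ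
  have hπ0 : ∀ z ∈ Y, π z = 0 := by
    intro z hz
    have hz0 : Y.mkQ z = 0 := (Submodule.Quotient.mk_eq_zero _).mpr hz
    show q (Y.mkQ z) = 0
    rw [hz0, map_zero]
  have hπs : ∀ m, π (s m) = m := by
    intro m
    have := congrArg (fun g : M →ₗ[A] M => g m) hs
    simpa using this
  set i : N →ₗ[A] (M × N) := Y.subtype ∘ₗ e.symm.toLinearMap with hi
  have hiY : ∀ n, i n ∈ Y := by intro n; simp [hi]
  have hπi : ∀ n, π (i n) = 0 := fun n => hπ0 _ (hiY n)
  have hiinj : Function.Injective i := by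
    intro a b hab
    apply e.symm.injective
    apply Subtype.ext
    simpa [hi] using hab
  set φ : (M × N) →ₗ[A] (M × N) := LinearMap.coprod s i with hφ
  have hφapp : ∀ x : M × N, φ x = s x.1 + i x.2 := fun _ => rfl
  have hφinj : Function.Injective φ := by
    rw [← LinearMap.ker_eq_bot, LinearMap.ker_eq_bot']
    rintro ⟨m, n⟩ h
    rw [hφapp] at h
    have hm : m = 0 := by
      have := congrArg π h
      rw [map_add, hπs, hπi, map_zero, add_zero] at this
      exact this
    have hn : i n = 0 := by
      rw [hm, map_zero, zero_add] at h
      exact h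
    have : n = 0 := hiinj (by rw [hn, map_zero])
    simp [hm, this]
  have hφsurj : Function.Surjective φ :=
    Finite.injective_iff_surjective.mp hφinj
  refine ⟨LinearEquiv.ofBijective φ ⟨hφinj, hφsurj⟩, ?_⟩
  ext x
  simp only [Submodule.mem_map]
  constructor
  · rintro ⟨y, hy, rfl⟩
    have hy1 : y.1 = 0 := (mem_Y0 y).mp hy
    show φ y ∈ Y
    rw [hφapp, hy1, map_zero, zero_add]
    exact hiY y.2
  · intro hx
    refine ⟨(0, e ⟨x, hx⟩), (mem_Y0 _).mpr rfl, ?_⟩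
    show φ (0, e ⟨x, hx⟩) = x
    rw [hφapp]
    simp [hi]

end Transitivity

section Stabilizer

variable [Finite M] [Finite N]

/-- The linear map `(m, n) ↦ (a m, c m + d n)`. -/
def psiAux (a : M ≃ₗ[A] M) (d : N ≃ₗ[A] N) (c : M →ₗ[A] N) : (M × N) →ₗ[A] (M × N) :=
  LinearMap.prod (a.toLinearMap ∘ₗ LinearMap.fst A M N)
    (c ∘ₗ LinearMap.fst A M N + d.toLinearMap ∘ₗ LinearMap.snd A M N)

lemma psiAux_apply (a : M ≃ₗ[A] M) (d : N ≃ₗ[A] N) (c : M →ₗ[A] N) (x : M × N) :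
    psiAux a d c x = (a x.1, c x.1 + d x.2) := rfl

lemma psiAux_injective (a : M ≃ₗ[A] M) (d : N ≃ₗ[A] N) (c : M →ₗ[A] N) :
    Function.Injective (psiAux a d c) := by
  rw [← LinearMap.ker_eq_bot, LinearMap.ker_eq_bot']
  rintro ⟨m, n⟩ h
  rw [psiAux_apply] at h
  have h1 : a m = 0 := congrArg Prod.fst h
  have hm : m = 0 := by
    apply a.injective; rw [h1, map_zero]
  have h2 : c m + d n = 0 := congrArg Prod.snd h
  rw [hm, map_zero, zero_add] at h2
  have hn : n = 0 := by
    apply d.injective; rw [h2, map_zero]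
  simp [hm, hn]

/-- The automorphism of `M × N` given by `(m, n) ↦ (a m, c m + d n)`. -/
noncomputable def psiEquiv (a : M ≃ₗ[A] M) (d : N ≃ₗ[A] N) (c : M →ₗ[A] N) :
    (M × N) ≃ₗ[A] (M × N) :=
  LinearEquiv.ofBijective (psiAux a d c)
    ⟨psiAux_injective a d c, Finite.injective_iff_surjective.mp (psiAux_injective a d c)⟩

lemma psiEquiv_apply (a : M ≃ₗ[A] M) (d : N ≃ₗ[A] N) (c : M →ₗ[A] N) (x : M × N) :
    psiEquiv a d c x = (a x.1, c x.1 + d x.2) := rfl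

lemma psiEquiv_maps_Y0 (a : M ≃ₗ[A] M) (d : N ≃ₗ[A] N) (c : M →ₗ[A] N) :
    Submodule.map (psiEquiv a d c : (M × N) →ₗ[A] (M × N)) (Y0 A M N) = Y0 A M N := by
  ext x
  simp only [Submodule.mem_map]
  constructor
  · rintro ⟨y, hy, rfl⟩
    have hy1 : y.1 = 0 := (mem_Y0 y).mp hy
    show (psiEquiv a d c y : M × N) ∈ Y0 A M N
    rw [mem_Y0]
    show (a y.1, c y.1 + d y.2).1 = 0
    simp [hy1]
  · intro hx
    have hx1 : x.1 = 0 := (mem_Y0 x).mp hx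
    refine ⟨(0, d.symm x.2), (mem_Y0 _).mpr rfl, ?_⟩
    show psiEquiv a d c (0, d.symm x.2) = x
    rw [psiEquiv_apply]
    simp only [map_zero, zero_add, LinearEquiv.apply_symm_apply]
    exact Prod.ext hx1.symm rfl

/-- The stabilizer of `Y0` is in bijection with `Aut M × Aut N × Hom(M, N)`. -/
noncomputable def stabEquiv :
    ((M ≃ₗ[A] M) × (N ≃ₗ[A] N) × (M →ₗ[A] N)) ≃
      {g : (M × N) ≃ₗ[A] (M × N) //
        Submodule.map (g : (M × N) →ₗ[A] (M × N)) (Y0 A M N) = Y0 A M N} := by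
  refine Equiv.ofBijective
    (fun p => ⟨psiEquiv p.1 p.2.1 p.2.2, psiEquiv_maps_Y0 p.1 p.2.1 p.2.2⟩) ⟨?_, ?_⟩
  · rintro ⟨a, d, c⟩ ⟨a', d', c'⟩ h
    have h' : ∀ x : M × N, psiEquiv a d c x = psiEquiv a' d' c' x := by
      intro x
      exact DFunLike.congr_fun (congrArg Subtype.val h) x
    have ha : a = a' := by
      ext m
      have := h' (m, 0)
      rw [psiEquiv_apply, psiEquiv_apply] at this
      exact congrArg Prod.fst this
    have hc : c = c' := by
      ext m
      have := h' (m, 0)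
      rw [psiEquiv_apply, psiEquiv_apply] at this
      have h2 := congrArg Prod.snd this
      simpa using h2
    have hd : d = d' := by
      ext n
      have := h' (0, n)
      rw [psiEquiv_apply, psiEquiv_apply] at this
      have h2 := congrArg Prod.snd this
      simpa using h2
    rw [ha, hc, hd]
  · rintro ⟨g, hg⟩
    -- membership facts
    have hg1 : ∀ n : N, (g (0, n)).1 = 0 := by
      intro n
      have hmem : ((0 : M), n) ∈ Y0 A M N := (mem_Y0 _).mpr rfl
      have : g (0, n) ∈ Y0 A M N := hg ▸ Submodule.mem_map_of_mem hmem
      exact (mem_Y0 _).mp this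
    -- the diagonal components
    set d0 : N →ₗ[A] N :=
      LinearMap.snd A M N ∘ₗ (g : (M × N) →ₗ[A] (M × N)) ∘ₗ LinearMap.inr A M N with hd0
    have hd0inj : Function.Injective d0 := by
      rw [← LinearMap.ker_eq_bot, LinearMap.ker_eq_bot']
      intro n hn
      have h2 : (g (0, n)).2 = 0 := hn
      have : g (0, n) = 0 := Prod.ext (hg1 n) h2
      have h3 : ((0 : M), n) = (0 : M × N) := g.injective (by rw [map_zero]; exact this)
      exact congrArg Prod.snd h3
    set a0 : M →ₗ[A] M :=
      LinearMap.fst A M N ∘ₗ (g : (M × N) →ₗ[A] (M × N)) ∘ₗ LinearMap.inl A M N with ha0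
    have ha0inj : Function.Injective a0 := by
      rw [← LinearMap.ker_eq_bot, LinearMap.ker_eq_bot']
      intro m hm
      have h1 : (g (m, 0)).1 = 0 := hm
      have hmem : g (m, 0) ∈ Y0 A M N := (mem_Y0 _).mpr h1
      rw [← hg] at hmem
      obtain ⟨y, hy, hgy⟩ := hmem
      have : y = (m, 0) := g.injective hgy
      rw [this] at hy
      exact (mem_Y0 _).mp hy
    set c0 : M →ₗ[A] N :=
      LinearMap.snd A M N ∘ₗ (g : (M × N) →ₗ[A] (M × N)) ∘ₗ LinearMap.inl A M N with hc0
    refine ⟨⟨LinearEquiv.ofBijective a0 ⟨ha0inj, Finite.injective_iff_surjective.mp ha0inj⟩,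
      LinearEquiv.ofBijective d0 ⟨hd0inj, Finite.injective_iff_surjective.mp hd0inj⟩, c0⟩, ?_⟩
    apply Subtype.ext
    apply LinearEquiv.toLinearMap_injective
    apply LinearMap.ext
    rintro ⟨m, n⟩
    show psiEquiv _ _ _ (m, n) = g (m, n)
    rw [psiEquiv_apply]
    show ((g (m, 0)).1, (g (m, 0)).2 + (g (0, n)).2) = g (m, n)
    have hsum : g (m, n) = g (m, 0) + g (0, n) := by
      rw [← map_add]; norm_num
    rw [hsum]
    exact Prod.ext (by simp [hg1 n]) rfl

end Stabilizer

end HallAux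

/-- Riedtmann's formula for the split extension. Let `k` be a finite
field, `A` a finite-dimensional `k`-algebra, and `M`, `N` finite-dimensional left
`A`-modules. Then the number of `A`-submodules `Y ⊆ M ⊕ N` with `Y ≅ N` and
`(M ⊕ N)/Y ≅ M` equals `|Aut_A(M ⊕ N)| / (|Aut_A M| · |Aut_A N| · |Hom_A(M,N)|)`
(stated here in multiplied-out form). -/
theorem hall_number_split_extension
    (k : Type) [Field k] [Fintype k]
    (A : Type) [Ring A] [Algebra k A] [FiniteDimensional k A]
    (M N : Type) [AddCommGroup M] [AddCommGroup N]
    [Module A M] [Module A N] [Module k M] [Module k N]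
    [IsScalarTower k A M] [IsScalarTower k A N]
    [FiniteDimensional k M] [FiniteDimensional k N] :
    Nat.card {Y : Submodule A (M × N) //
        Nonempty (Y ≃ₗ[A] N) ∧ Nonempty (((M × N) ⧸ Y) ≃ₗ[A] M)}
        * (Nat.card (M ≃ₗ[A] M) * Nat.card (N ≃ₗ[A] N) * Nat.card (M →ₗ[A] N))
      = Nat.card ((M × N) ≃ₗ[A] (M × N)) := by
  classical
  haveI : Finite M := Module.finite_of_finite k
  haveI : Finite N := Module.finite_of_finite k
  open HallAux in
  set G := (M × N) ≃ₗ[A] (M × N)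
  set Y₀ := HallAux.Y0 A M N with hY₀
  -- the predicate is equivalent to orbit membership
  have horb : ∀ Y : Submodule A (M × N),
      (Nonempty (Y ≃ₗ[A] N) ∧ Nonempty (((M × N) ⧸ Y) ≃ₗ[A] M)) ↔
        Y ∈ MulAction.orbit G Y₀ := by
    intro Y
    constructor
    · rintro ⟨⟨e⟩, ⟨q⟩⟩
      obtain ⟨g, hg⟩ := HallAux.exists_equiv_map Y e q
      exact ⟨g, (HallAux.smul_def' g Y₀).trans hg⟩
    · rintro ⟨g, rfl⟩
      constructor
      · exact ⟨(LinearEquiv.ofEq _ _ (HallAux.smul_def' g Y₀)).trans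
          ((g.submoduleMap Y₀).symm.trans HallAux.e0)⟩
      · refine ⟨(Submodule.Quotient.equiv Y₀ (g • Y₀) g ?_).symm.trans HallAux.q0⟩
        exact (HallAux.smul_def' g Y₀).symm
  -- card of the subtype = card of the orbit
  have hcardS : Nat.card {Y : Submodule A (M × N) //
        Nonempty (Y ≃ₗ[A] N) ∧ Nonempty (((M × N) ⧸ Y) ≃ₗ[A] M)}
      = Nat.card (MulAction.orbit G Y₀) := by
    exact Nat.card_congr (Equiv.subtypeEquivRight horb)
  -- card of the stabilizer
  have hstab : Nat.card (MulAction.stabilizer G Y₀)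
      = Nat.card (M ≃ₗ[A] M) * Nat.card (N ≃ₗ[A] N) * Nat.card (M →ₗ[A] N) := by
    have e1 : ↥(MulAction.stabilizer G Y₀) ≃
        {g : (M × N) ≃ₗ[A] (M × N) //
          Submodule.map (g : (M × N) →ₗ[A] (M × N)) Y₀ = Y₀} := by
      refine Equiv.subtypeEquivRight ?_
      intro g
      rw [MulAction.mem_stabilizer_iff, HallAux.smul_def' g Y₀]
    rw [Nat.card_congr e1, Nat.card_congr (HallAux.stabEquiv (A := A) (M := M) (N := N)).symm,
      Nat.card_prod, Nat.card_prod, mul_assoc]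
  -- orbit-stabilizer
  have horbstab : Nat.card G
      = Nat.card (MulAction.orbit G Y₀) * Nat.card (MulAction.stabilizer G Y₀) := by
    rw [Subgroup.card_eq_card_quotient_mul_card_subgroup (MulAction.stabilizer G Y₀),
      Nat.card_congr (MulAction.orbitEquivQuotientStabilizer G Y₀)]
  rw [hcardS, horbstab, hstab]
end

section
/- Let k be a field, m ≥ 1, and let (L, T_L) be a finite-dimensional nilpotent representation of the cyclic quiver with m vertices such that Hom(L, S_{i+1}) = 0. Then for every a ≥ 0 one has dim_k Hom(S_i(a+1), L) = dim_k Hom(S_{i+1}(a), L) + dim_k Hom(S_i, L). -/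
open Module

variable (k : Type) [Field k] (m : ℕ)

/-- The space of homomorphisms between two nilpotent representations of the cyclic quiver
with `m` vertices, each encoded as a `ℤ/m`-graded vector space together with a (nilpotent)
operator homogeneous of degree `1`: a homomorphism is a linear map preserving the grading
and intertwining the two operators. -/
def RepHom {V W : Type} [AddCommGroup V] [Module k V] [AddCommGroup W] [Module k W]
    (gV : ZMod m → Submodule k V) (TV : V →ₗ[k] V)
    (gW : ZMod m → Submodule k W) (TW : W →ₗ[k] W) : Submodule k (V →ₗ[k] W) where
  carrier := {f | (∀ j : ZMod m, ∀ v ∈ gV j, f v ∈ gW j) ∧ f ∘ₗ TV = TW ∘ₗ f}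
  add_mem' := by
    rintro f g ⟨hf1, hf2⟩ ⟨hg1, hg2⟩
    refine ⟨fun j v hv => ?_, ?_⟩
    · simpa using add_mem (hf1 j v hv) (hg1 j v hv)
    · simp only [LinearMap.add_comp, LinearMap.comp_add, hf2, hg2]
  zero_mem' := ⟨fun j v hv => by simp, by simp⟩
  smul_mem' := by
    rintro c f ⟨hf1, hf2⟩
    refine ⟨fun j v hv => ?_, ?_⟩
    · simpa using Submodule.smul_mem _ c (hf1 j v hv)
    · simp only [LinearMap.smul_comp, LinearMap.comp_smul, hf2]

/-- The shift operator `e_t ↦ e_{t+1}` (and `e_{a-1} ↦ 0`) on `k^a`; this is the underlying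
nilpotent operator of the indecomposable representation `S_i(a)`. -/
def shiftMap (a : ℕ) : (Fin a → k) →ₗ[k] (Fin a → k) where
  toFun f t := if h : (t : ℕ) = 0 then 0
    else f ⟨(t : ℕ) - 1, Nat.lt_of_le_of_lt (Nat.sub_le _ _) t.isLt⟩
  map_add' f g := by
    funext t
    by_cases h : (t : ℕ) = 0 <;> simp [h]
  map_smul' c f := by
    funext t
    by_cases h : (t : ℕ) = 0 <;> simp [h]

/-- The grading of the indecomposable representation `S_i(a)` on `k^a`: the basis vector
`e_t` is homogeneous of degree `i + t (mod m)`. -/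
def sGrading (i : ZMod m) (a : ℕ) (j : ZMod m) : Submodule k (Fin a → k) where
  carrier := {f | ∀ t : Fin a, i + ((t : ℕ) : ZMod m) ≠ j → f t = 0}
  add_mem' := fun hf hg t ht => by
    rw [Pi.add_apply, hf t ht, hg t ht, add_zero]
  zero_mem' := fun t _ => rfl
  smul_mem' := fun c f hf t ht => by rw [Pi.smul_apply, hf t ht, smul_zero]

/-!
A homomorphism `S_i(a) → L` is determined by the image `x` of the generator `e_0`, and `x` can
be any vector of `L_i` with `T^a x = 0`; so `Hom(S_i(a), L) ≅ L_i ∩ ker T^a`. If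
`T(L_i) ⊊ L_{i+1}`, a linear form on `L` vanishing on `T(L_i)` and on the other homogeneous
components, but not on `L_{i+1}`, is a nonzero homomorphism `L → S_{i+1}`; hence
`Hom(L, S_{i+1}) = 0` forces `T(L_i) = L_{i+1}`. Then `T` maps `L_i ∩ ker T^(a+1)` onto
`L_{i+1} ∩ ker T^a` with kernel `L_i ∩ ker T`, and rank–nullity gives the formula.
-/

section

variable {k m}

theorem shiftMap_single {a : ℕ} (s : Fin a) (c : k) :
    shiftMap k a (Pi.single s c) =
      if h : (s : ℕ) + 1 < a then Pi.single ⟨s + 1, h⟩ c else 0 := by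
  ext t
  simp only [shiftMap, LinearMap.coe_mk, AddHom.coe_mk]
  split_ifs <;> simp only [Pi.single_apply, Fin.ext_iff, Pi.zero_apply] <;>
    split_ifs <;> first | rfl | omega

theorem shiftMap_pow_single {a : ℕ} (n : ℕ) (s : Fin a) (c : k) :
    (shiftMap k a ^ n) (Pi.single s c) =
      if h : (s : ℕ) + n < a then Pi.single ⟨s + n, h⟩ c else 0 := by
  induction n with
  | zero => simp
  | succ n ih =>
    rw [pow_succ', Module.End.mul_apply, ih]
    by_cases h : (s : ℕ) + n < a
    · simp only [dif_pos h, shiftMap_single, ← add_assoc]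
    · rw [dif_neg h, map_zero, dif_neg (by omega)]

theorem shiftMap_one : shiftMap k 1 = 0 := by
  ext f t
  simp [shiftMap]

theorem single_mem_sGrading (i : ZMod m) {a : ℕ} (s : Fin a) (c : k) :
    Pi.single s c ∈ sGrading k m i a (i + ((s : ℕ) : ZMod m)) := by
  intro t ht
  rw [Pi.single_apply, if_neg]
  rintro rfl
  exact ht rfl

variable {L : Type} [AddCommGroup L] [Module k L] {gL : ZMod m → Submodule k L}
  {TL : L →ₗ[k] L}

theorem map_inf_ker_pow_succ (T : L →ₗ[k] L) (U : Submodule k L) (a : ℕ) :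
    (U ⊓ LinearMap.ker (T ^ (a + 1))).map T = U.map T ⊓ LinearMap.ker (T ^ a) := by
  ext y
  simp only [Submodule.mem_map, Submodule.mem_inf, LinearMap.mem_ker, pow_succ,
    Module.End.mul_apply]
  constructor
  · rintro ⟨x, ⟨hxU, hx⟩, rfl⟩
    exact ⟨⟨x, hxU, rfl⟩, hx⟩
  · rintro ⟨⟨x, hxU, rfl⟩, hy⟩
    exact ⟨x, ⟨hxU, hy⟩, rfl⟩

theorem finrank_inf_ker_pow_succ [FiniteDimensional k L] (T : L →ₗ[k] L) (U : Submodule k L)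
    (a : ℕ) :
    finrank k (U ⊓ LinearMap.ker (T ^ (a + 1)) : Submodule k L) =
      finrank k (U.map T ⊓ LinearMap.ker (T ^ a) : Submodule k L) +
        finrank k (U ⊓ LinearMap.ker T : Submodule k L) := by
  set V := U ⊓ LinearMap.ker (T ^ (a + 1))
  have hle : U ⊓ LinearMap.ker T ≤ V := inf_le_inf_left U fun x hx => by
    rw [LinearMap.mem_ker, pow_succ, Module.End.mul_apply, LinearMap.mem_ker.1 hx, map_zero]
  have hker : LinearMap.ker (T.domRestrict V) = (U ⊓ LinearMap.ker T).comap V.subtype := by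
    ext ⟨x, hxU, -⟩
    simpa using fun _ => hxU
  have hrank := LinearMap.finrank_range_add_finrank_ker (T.domRestrict V)
  rw [LinearMap.range_domRestrict, map_inf_ker_pow_succ, hker,
    (Submodule.comapSubtypeEquivOfLe hle).finrank_eq] at hrank
  exact hrank.symm

theorem pow_apply_mem_of_mem (hdeg : ∀ j : ZMod m, ∀ v ∈ gL j, TL v ∈ gL (j + 1)) (n : ℕ)
    {j : ZMod m} {v : L} (hv : v ∈ gL j) : (TL ^ n) v ∈ gL (j + n) := by
  induction n with
  | zero => simpa using hv
  | succ n ih =>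
    rw [pow_succ', Module.End.mul_apply, Nat.cast_succ, ← add_assoc]
    exact hdeg _ _ ih

variable (TL) in
def orbitMap (a : ℕ) (x : L) : (Fin a → k) →ₗ[k] L :=
  Fintype.linearCombination k fun t : Fin a => (TL ^ (t : ℕ)) x

theorem orbitMap_single {a : ℕ} (x : L) (s : Fin a) (c : k) :
    orbitMap TL a x (Pi.single s c) = c • (TL ^ (s : ℕ)) x :=
  Fintype.linearCombination_apply_single k _ s c

theorem orbitMap_mem_repHom (hdeg : ∀ j : ZMod m, ∀ v ∈ gL j, TL v ∈ gL (j + 1))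
    {i : ZMod m} {a : ℕ} {x : L} (hx : x ∈ gL i) (hxa : (TL ^ a) x = 0) :
    orbitMap TL a x ∈ RepHom k m (sGrading k m i a) (shiftMap k a) gL TL := by
  refine ⟨fun j v hv => ?_, LinearMap.pi_ext fun s c => ?_⟩
  · rw [orbitMap, Fintype.linearCombination_apply]
    refine Submodule.sum_mem _ fun t _ => ?_
    by_cases hj : i + ((t : ℕ) : ZMod m) = j
    · exact Submodule.smul_mem _ _ (hj ▸ pow_apply_mem_of_mem hdeg t hx)
    · rw [hv t hj, zero_smul]
      exact Submodule.zero_mem _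
  · rw [LinearMap.comp_apply, LinearMap.comp_apply, shiftMap_single, orbitMap_single, map_smul,
      ← Module.End.mul_apply, ← pow_succ']
    split_ifs with h
    · exact orbitMap_single x _ c
    · rw [show (s : ℕ) + 1 = a by omega, hxa, smul_zero, map_zero]

theorem apply_single_zero_mem_inf_ker {i : ZMod m} {a : ℕ} {f : (Fin (a + 1) → k) →ₗ[k] L}
    (hf : f ∈ RepHom k m (sGrading k m i (a + 1)) (shiftMap k (a + 1)) gL TL) :
    f (Pi.single 0 1) ∈ gL i ⊓ LinearMap.ker (TL ^ (a + 1)) := by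
  refine ⟨by simpa using hf.1 _ _ (single_mem_sGrading i (0 : Fin (a + 1)) (1 : k)), ?_⟩
  change (TL ^ (a + 1)) (f _) = 0
  rw [← LinearMap.comp_apply,
    Module.End.commute_pow_left_of_commute hf.2.symm, LinearMap.comp_apply, shiftMap_pow_single,
    dif_neg (by simp), map_zero]

theorem orbitMap_apply_single_zero_eq {i : ZMod m} {a : ℕ} {f : (Fin (a + 1) → k) →ₗ[k] L}
    (hf : f ∈ RepHom k m (sGrading k m i (a + 1)) (shiftMap k (a + 1)) gL TL) :
    orbitMap TL (a + 1) (f (Pi.single 0 1)) = f := by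
  refine LinearMap.pi_ext fun s c => ?_
  rw [orbitMap_single, ← LinearMap.comp_apply (TL ^ (s : ℕ)),
    Module.End.commute_pow_left_of_commute hf.2.symm, LinearMap.comp_apply,
    shiftMap_pow_single, dif_pos (by simpa using s.isLt), ← map_smul, ← Pi.single_smul',
    smul_eq_mul, mul_one]
  simp

theorem pi_mem_repHom_sGrading_one {i : ZMod m} {φ : Module.Dual k L}
    (hφT : ∀ v, φ (TL v) = 0) (hφg : ∀ j ≠ i, ∀ v ∈ gL j, φ v = 0) :
    LinearMap.pi (fun _ : Fin 1 => φ) ∈ RepHom k m gL TL (sGrading k m i 1) (shiftMap k 1) := by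
  refine ⟨fun j v hv t ht => hφg j (fun hj => ht ?_) v hv, ?_⟩
  · simp [hj]
  · ext v t
    simp [shiftMap_one, hφT]

variable (hdeg : ∀ j : ZMod m, ∀ v ∈ gL j, TL v ∈ gL (j + 1))
include hdeg

def repHomSGradingEquiv (i : ZMod m) (a : ℕ) :
    RepHom k m (sGrading k m i (a + 1)) (shiftMap k (a + 1)) gL TL ≃ₗ[k]
      (gL i ⊓ LinearMap.ker (TL ^ (a + 1)) : Submodule k L) where
  toFun f := ⟨f.1 (Pi.single 0 1), apply_single_zero_mem_inf_ker f.2⟩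
  invFun x := ⟨orbitMap TL (a + 1) x, orbitMap_mem_repHom hdeg x.2.1 x.2.2⟩
  map_add' _ _ := rfl
  map_smul' _ _ := rfl
  left_inv f := Subtype.ext (orbitMap_apply_single_zero_eq f.2)
  right_inv x := Subtype.ext <| by simp [orbitMap_single]

theorem finrank_repHom_sGrading (i : ZMod m) :
    ∀ a : ℕ, finrank k (RepHom k m (sGrading k m i a) (shiftMap k a) gL TL) =
      finrank k (gL i ⊓ LinearMap.ker (TL ^ a) : Submodule k L)
  | 0 => by
    rw [pow_zero, Module.End.one_eq_id, LinearMap.ker_id, inf_bot_eq, finrank_bot]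
    exact finrank_eq_zero_of_subsingleton ..
  | a + 1 => (repHomSGradingEquiv hdeg i a).finrank_eq

theorem range_le_map_sup_iSup_ne (hgL : ⨆ j, gL j = ⊤) (i : ZMod m) :
    LinearMap.range TL ≤ (gL i).map TL ⊔ ⨆ (j) (_ : j ≠ i + 1), gL j := by
  rw [LinearMap.range_eq_map, ← hgL, Submodule.map_iSup]
  refine iSup_le fun j => ?_
  by_cases hj : j = i
  · exact hj ▸ le_sup_left
  · have hle : gL (j + 1) ≤ ⨆ (j) (_ : j ≠ i + 1), gL j :=
      le_iSup₂ (f := fun j (_ : j ≠ i + 1) => gL j) (j + 1) (by simpa using hj)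
    exact le_sup_of_le_right (le_trans (Submodule.map_le_iff_le_comap.2 (hdeg j)) hle)

theorem map_eq_of_repHom_sGrading_one_eq_bot (hgL : DirectSum.IsInternal gL) (i : ZMod m)
    (hLS : RepHom k m gL TL (sGrading k m (i + 1) 1) (shiftMap k 1) = ⊥) :
    (gL i).map TL = gL (i + 1) := by
  refine le_antisymm (Submodule.map_le_iff_le_comap.2 (hdeg i)) fun y hy => ?_
  by_contra hyN
  set K := (gL i).map TL ⊔ ⨆ (j) (_ : j ≠ i + 1), gL j
  have hyK : y ∉ K := by
    intro hyK
    obtain ⟨n, hn, z, hz, rfl⟩ := Submodule.mem_sup.1 hyK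
    have hz' : z ∈ gL (i + 1) := by
      simpa using sub_mem hy (Submodule.map_le_iff_le_comap.2 (hdeg i) hn)
    rw [Submodule.disjoint_def.1 (hgL.submodule_iSupIndep (i + 1)) z hz' hz, add_zero] at hyN
    exact hyN hn
  obtain ⟨φ, hφy, hφK⟩ := Submodule.exists_dual_map_eq_bot_of_notMem hyK inferInstance
  have hKφ : K ≤ LinearMap.ker φ := LinearMap.le_ker_iff_map.2 hφK
  have hmem := pi_mem_repHom_sGrading_one
    (fun v => hKφ (range_le_map_sup_iSup_ne hdeg hgL.submodule_iSup_eq_top i ⟨v, rfl⟩))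
    (fun j hj v hv =>
      hKφ (le_sup_of_le_right (le_iSup₂ (f := fun j (_ : j ≠ i + 1) => gL j) j hj) hv))
  rw [hLS, Submodule.mem_bot] at hmem
  exact hφy (congr_fun (LinearMap.congr_fun hmem y) 0)

end

theorem dim_hom_from_cyclic_succ
    (L : Type) [AddCommGroup L] [Module k L] [FiniteDimensional k L]
    (gL : ZMod m → Submodule k L) (hgL : DirectSum.IsInternal gL)
    (TL : L →ₗ[k] L)
    (hdeg : ∀ j : ZMod m, ∀ v ∈ gL j, TL v ∈ gL (j + 1))
    (i : ZMod m)
    (hLSi : RepHom k m gL TL (sGrading k m (i + 1) 1) (shiftMap k 1) = ⊥)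
    (a : ℕ) :
    finrank k (RepHom k m (sGrading k m i (a + 1)) (shiftMap k (a + 1)) gL TL)
      = finrank k (RepHom k m (sGrading k m (i + 1) a) (shiftMap k a) gL TL)
        + finrank k (RepHom k m (sGrading k m i 1) (shiftMap k 1) gL TL) := by
  rw [finrank_repHom_sGrading hdeg, finrank_repHom_sGrading hdeg, finrank_repHom_sGrading hdeg,
    finrank_inf_ker_pow_succ, map_eq_of_repHom_sGrading_one_eq_bot hdeg hgL i hLSi, pow_one]
end
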